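/- arXiv:math/0304174 — 4 statements merged into one kernel-verified Lean document; each statement's English description precedes it below -/
import Mathlib

section
/- Let Γ be a finite group with representation G : Γ → GL(c,ℂ), π the averaging projection, and B ∈ Mat^Γ. Let T = {[B,y] : y ∈ Mat_{c×c}} and W ⊆ Mat_{c×c} a subspace with Mat_{c×c} = T + W. Then Mat^Γ = {[B,y] : y ∈ Mat^Γ} + π(W), where π(W) denotes the image of W under π. -/
noncomputable def avg {Γ : Type*} [Group Γ] [Fintype Γ] {c : ℕ}
    (G : Γ →* Matrix.GeneralLinearGroup (Fin c) ℂ)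
    (M : Matrix (Fin c) (Fin c) ℂ) : Matrix (Fin c) (Fin c) ℂ :=
  (Fintype.card Γ : ℂ)⁻¹ • ∑ γ : Γ,
    (G γ : Matrix (Fin c) (Fin c) ℂ) * M * (((G γ)⁻¹ : Matrix.GeneralLinearGroup (Fin c) ℂ) : Matrix (Fin c) (Fin c) ℂ)

section helper

variable {Γ : Type*} [Group Γ] [Fintype Γ] {c : ℕ}
    (G : Γ →* Matrix.GeneralLinearGroup (Fin c) ℂ)

lemma avg_comm (M : Matrix (Fin c) (Fin c) ℂ) (γ : Γ) :
    (G γ : Matrix (Fin c) (Fin c) ℂ) * avg G M = avg G M * (G γ : Matrix (Fin c) (Fin c) ℂ) := by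
  unfold avg
  rw [Matrix.mul_smul, Matrix.smul_mul, Finset.mul_sum, Finset.sum_mul]
  congr 1
  refine Fintype.sum_equiv (Equiv.mulLeft γ) _ _ ?_
  intro δ
  have hdet : IsUnit ((G γ : Matrix (Fin c) (Fin c) ℂ)).det :=
    (Matrix.isUnit_iff_isUnit_det _).mp (G γ).isUnit
  simp [map_mul, mul_inv_rev, Units.val_mul, mul_assoc, Matrix.nonsing_inv_mul _ hdet]

lemma avg_fixed (M : Matrix (Fin c) (Fin c) ℂ)
    (hM : ∀ γ : Γ, (G γ : Matrix (Fin c) (Fin c) ℂ) * M = M * (G γ : Matrix (Fin c) (Fin c) ℂ)) :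
    avg G M = M := by
  unfold avg
  have : ∀ γ : Γ, (G γ : Matrix (Fin c) (Fin c) ℂ) * M
      * (((G γ)⁻¹ : Matrix.GeneralLinearGroup (Fin c) ℂ) : Matrix (Fin c) (Fin c) ℂ) = M := by
    intro γ
    have hdet : IsUnit ((G γ : Matrix (Fin c) (Fin c) ℂ)).det :=
      (Matrix.isUnit_iff_isUnit_det _).mp (G γ).isUnit
    rw [hM γ, mul_assoc]
    simp [Matrix.mul_nonsing_inv _ hdet]
  rw [Finset.sum_congr rfl (fun γ _ => this γ), Finset.sum_const]
  have hcard : (Fintype.card Γ : ℂ) ≠ 0 := by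
    exact_mod_cast Nat.cast_ne_zero.mpr Fintype.card_ne_zero
  simp [← Nat.cast_smul_eq_nsmul ℂ, smul_smul, inv_mul_cancel₀ hcard]

lemma avg_add (M N : Matrix (Fin c) (Fin c) ℂ) : avg G (M + N) = avg G M + avg G N := by
  simp [avg, mul_add, add_mul, Finset.sum_add_distrib, smul_add]

lemma avg_sub (M N : Matrix (Fin c) (Fin c) ℂ) : avg G (M - N) = avg G M - avg G N := by
  simp [avg, mul_sub, sub_mul, Finset.sum_sub_distrib, smul_sub]

lemma avg_B_mul (B : Matrix (Fin c) (Fin c) ℂ)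
    (hB : ∀ γ : Γ, (G γ : Matrix (Fin c) (Fin c) ℂ) * B = B * (G γ : Matrix (Fin c) (Fin c) ℂ))
    (y : Matrix (Fin c) (Fin c) ℂ) : avg G (B * y) = B * avg G y := by
  unfold avg
  rw [mul_smul_comm, Finset.mul_sum]
  congr 1
  refine Finset.sum_congr rfl fun γ _ => ?_
  rw [← mul_assoc, hB γ]
  simp [mul_assoc]

lemma avg_mul_B (B : Matrix (Fin c) (Fin c) ℂ)
    (hB : ∀ γ : Γ, (G γ : Matrix (Fin c) (Fin c) ℂ) * B = B * (G γ : Matrix (Fin c) (Fin c) ℂ))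
    (y : Matrix (Fin c) (Fin c) ℂ) : avg G (y * B) = avg G y * B := by
  have hB' : ∀ γ : Γ, B * (((G γ)⁻¹ : Matrix.GeneralLinearGroup (Fin c) ℂ) : Matrix (Fin c) (Fin c) ℂ)
      = (((G γ)⁻¹ : Matrix.GeneralLinearGroup (Fin c) ℂ) : Matrix (Fin c) (Fin c) ℂ) * B := by
    intro γ
    have h := hB γ
    have : (((G γ)⁻¹ : Matrix.GeneralLinearGroup (Fin c) ℂ) : Matrix (Fin c) (Fin c) ℂ)
        * ((G γ : Matrix (Fin c) (Fin c) ℂ) * B)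
        * (((G γ)⁻¹ : Matrix.GeneralLinearGroup (Fin c) ℂ) : Matrix (Fin c) (Fin c) ℂ)
        = (((G γ)⁻¹ : Matrix.GeneralLinearGroup (Fin c) ℂ) : Matrix (Fin c) (Fin c) ℂ)
        * (B * (G γ : Matrix (Fin c) (Fin c) ℂ))
        * (((G γ)⁻¹ : Matrix.GeneralLinearGroup (Fin c) ℂ) : Matrix (Fin c) (Fin c) ℂ) := by rw [h]
    have hdet : IsUnit ((G γ : Matrix (Fin c) (Fin c) ℂ)).det :=
      (Matrix.isUnit_iff_isUnit_det _).mp (G γ).isUnit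
    rw [Matrix.coe_units_inv]
    simpa [← mul_assoc, mul_assoc, Matrix.mul_nonsing_inv _ hdet,
      Matrix.nonsing_inv_mul _ hdet, Matrix.nonsing_inv_mul_cancel_left _ _ hdet,
      Matrix.mul_nonsing_inv_cancel_left _ _ hdet] using this
  unfold avg
  rw [smul_mul_assoc, Finset.sum_mul]
  congr 1
  refine Finset.sum_congr rfl fun γ _ => ?_
  rw [mul_assoc, mul_assoc, hB' γ, ← mul_assoc, ← mul_assoc, mul_assoc _ _ B]

end helper

theorem stmt4 {Γ : Type*} [Group Γ] [Fintype Γ] {c : ℕ}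
    (G : Γ →* Matrix.GeneralLinearGroup (Fin c) ℂ)
    (B : Matrix (Fin c) (Fin c) ℂ)
    (hB : ∀ γ : Γ, (G γ : Matrix (Fin c) (Fin c) ℂ) * B = B * (G γ : Matrix (Fin c) (Fin c) ℂ))
    (W : Submodule ℂ (Matrix (Fin c) (Fin c) ℂ))
    (hW : ∀ X : Matrix (Fin c) (Fin c) ℂ, ∃ y, ∃ w ∈ W, X = (B * y - y * B) + w) :
    {X : Matrix (Fin c) (Fin c) ℂ |
        ∀ γ : Γ, (G γ : Matrix (Fin c) (Fin c) ℂ) * X = X * (G γ : Matrix (Fin c) (Fin c) ℂ)} =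
      {X | ∃ y : Matrix (Fin c) (Fin c) ℂ,
        (∀ γ : Γ, (G γ : Matrix (Fin c) (Fin c) ℂ) * y = y * (G γ : Matrix (Fin c) (Fin c) ℂ)) ∧
        ∃ w ∈ W, X = (B * y - y * B) + avg G w} := by
  ext X
  simp only [Set.mem_setOf_eq]
  constructor
  · intro hX
    obtain ⟨y, w, hw, hXeq⟩ := hW X
    refine ⟨avg G y, fun γ => avg_comm G y γ, w, hw, ?_⟩
    have := avg_fixed G X hX
    rw [← this, hXeq, avg_add, avg_sub, avg_B_mul G B hB, avg_mul_B G B hB]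
  · rintro ⟨y, hy, w, hw, rfl⟩ γ
    have h1 : (G γ : Matrix (Fin c) (Fin c) ℂ) * (B * y) = (B * y) * (G γ : Matrix (Fin c) (Fin c) ℂ) := by
      rw [← mul_assoc, hB, mul_assoc, hy, ← mul_assoc]
    have h2 : (G γ : Matrix (Fin c) (Fin c) ℂ) * (y * B) = (y * B) * (G γ : Matrix (Fin c) (Fin c) ℂ) := by
      rw [← mul_assoc, hy, mul_assoc, hB, ← mul_assoc]
    rw [mul_add, add_mul, mul_sub, sub_mul, h1, h2, avg_comm]
end

section
/- Let ω₁, ω₂ be real numbers with ω₁ ≠ ±ω₂, ω₁ ≠ 0, ω₂ ≠ 0. Then there exist real numbers τ₀, τ₁, τ₂, τ₃ such that the 4×4 matrix M with rows (e^{iω₁τ₀}, e^{iω₁τ₁}, e^{iω₁τ₂}, e^{iω₁τ₃}), (e^{-iω₁τ₀}, ..., e^{-iω₁τ₃}), (e^{iω₂τ₀}, ..., e^{iω₂τ₃}), (e^{-iω₂τ₀}, ..., e^{-iω₂τ₃}) is invertible. -/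
open Complex Real

lemma keylem (a b t : ℝ) (hab : a ≠ b) (ht : 0 < t) (hbound : |a - b| * t < 2 * Real.pi) :
    Complex.exp (Complex.I * a * t) ≠ Complex.exp (Complex.I * b * t) := by
  intro h
  rw [Complex.exp_eq_exp_iff_exists_int] at h
  obtain ⟨n, hn⟩ := h
  have h2 : ((a - b) * t : ℂ) = (n : ℂ) * (2 * Real.pi) := by
    apply mul_left_cancel₀ Complex.I_ne_zero
    push_cast
    linear_combination hn
  have h3 : (a - b) * t = (n : ℝ) * (2 * Real.pi) := by exact_mod_cast h2
  rcases eq_or_ne n 0 with rfl | hn0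
  · simp at h3
    rcases h3 with h3 | h3
    · exact hab (sub_eq_zero.mp h3)
    · exact ht.ne' h3
  · have h4 : |(a - b) * t| = |(n : ℝ)| * (2 * Real.pi) := by
      rw [h3, abs_mul, abs_of_pos Real.two_pi_pos]
    have h5 : (1 : ℝ) ≤ |(n : ℝ)| := by
      exact_mod_cast Int.one_le_abs hn0
    have h6 : |(a - b) * t| = |a - b| * t := by
      rw [abs_mul, abs_of_pos ht]
    nlinarith [Real.pi_pos]

theorem stmt9 (ω₁ ω₂ : ℝ) (h12 : ω₁ ≠ ω₂) (h12' : ω₁ ≠ -ω₂) (h1 : ω₁ ≠ 0) (h2 : ω₂ ≠ 0) :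
    ∃ τ₀ τ₁ τ₂ τ₃ : ℝ,
      IsUnit (Matrix.of fun j k : Fin 4 =>
        Complex.exp
          ((![Complex.I * ω₁, -(Complex.I * ω₁), Complex.I * ω₂, -(Complex.I * ω₂)] j) *
            (![(τ₀ : ℂ), τ₁, τ₂, τ₃] k))) := by
  have hSpos : 0 < |ω₁| + |ω₂| := by positivity
  set S : ℝ := |ω₁| + |ω₂| with hS
  set t : ℝ := Real.pi / (2 * S) with htdef
  have ht : 0 < t := by positivity
  refine ⟨0, t, 2 * t, 3 * t, ?_⟩
  set w : Fin 4 → ℝ := ![ω₁, -ω₁, ω₂, -ω₂] with hw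
  set v : Fin 4 → ℂ := fun j => Complex.exp (Complex.I * (w j) * t) with hv
  have hL : ∀ j : Fin 4,
      (![Complex.I * (ω₁:ℂ), -(Complex.I * ω₁), Complex.I * ω₂, -(Complex.I * ω₂)] j)
        = Complex.I * ((w j : ℝ) : ℂ) := by
    intro j
    fin_cases j <;> simp [hw] <;> push_cast <;> ring
  have hT : ∀ k : Fin 4,
      (![((0:ℝ) : ℂ), ((t:ℝ):ℂ), ((2*t:ℝ):ℂ), ((3*t:ℝ):ℂ)] k) = ((k : ℕ) : ℂ) * (t : ℂ) := by
    intro k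
    fin_cases k <;> simp <;> push_cast <;> ring
  have hM : (Matrix.of fun j k : Fin 4 =>
        Complex.exp
          ((![Complex.I * ω₁, -(Complex.I * ω₁), Complex.I * ω₂, -(Complex.I * ω₂)] j) *
            (![((0:ℝ) : ℂ), ((t:ℝ):ℂ), ((2*t:ℝ):ℂ), ((3*t:ℝ):ℂ)] k))) = Matrix.vandermonde v := by
    ext j k
    rw [Matrix.of_apply, hL, hT, Matrix.vandermonde_apply, hv, ← Complex.exp_nat_mul]
    congr 1
    ring
  have hbound : ∀ a b : ℝ, |a| ≤ S → |b| ≤ S → |a - b| * t < 2 * Real.pi := by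
    intro a b ha hb
    have hd : |a - b| ≤ 2 * S := by
      calc |a - b| ≤ |a| + |b| := abs_sub a b
        _ ≤ 2 * S := by linarith
    have hmul : |a - b| * t ≤ 2 * S * t := by nlinarith
    have heq : 2 * S * t = Real.pi := by
      rw [htdef]; field_simp
    nlinarith [Real.pi_pos]
  have habs : ∀ j : Fin 4, |w j| ≤ S := by
    intro j
    fin_cases j <;> simp [hw, abs_neg] <;> rw [hS] <;>
      nlinarith [abs_nonneg ω₁, abs_nonneg ω₂]
  have hwinj : ∀ j j' : Fin 4, j ≠ j' → w j ≠ w j' := by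
    intro j j' hne
    fin_cases j <;> fin_cases j' <;>
      first
        | exact absurd rfl hne
        | (simp only [hw, ne_eq]
           norm_num
           first
             | exact h1
             | exact h2
             | exact h12
             | exact h12'
             | (intro h;
                first
                  | exact h1 (by linarith)
                  | exact h2 (by linarith)
                  | exact h12 (by linarith)
                  | exact h12' (by linarith)))
  have hinj : Function.Injective v := by
    intro j j' hjj
    by_contra hne
    exact keylem (w j) (w j') t (hwinj j j' hne) ht (hbound _ _ (habs j) (habs j')) hjj
  rw [Matrix.isUnit_iff_isUnit_det, isUnit_iff_ne_zero]
  rw [hM, Matrix.det_vandermonde_ne_zero_iff]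
  exact hinj
end

section
/- If λ₁, λ₂, λ₃, λ₄ are pairwise distinct complex numbers, then there exist real numbers τ₀, τ₁, τ₂, τ₃ making the matrix M with entries M_{jk} = e^{λ_j τ_k} (j = 1,...,4, k = 0,...,3) invertible. -/
theorem stmt10 (l : Fin 4 → ℂ) (hl : Function.Injective l) :
    ∃ τ : Fin 4 → ℝ,
      IsUnit (Matrix.of fun j k : Fin 4 => Complex.exp (l j * (τ k : ℂ))) := by
  classical
  set S : Set ℝ :=
    ⋃ i : Fin 4, ⋃ j : Fin 4,
      {t : ℝ | l i ≠ l j ∧ Complex.exp ((l i - l j) * t) = 1} with hSdef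
  have hS : S.Countable := by
    refine Set.countable_iUnion fun i => Set.countable_iUnion fun j => ?_
    rcases eq_or_ne (l i) (l j) with h | h
    · convert Set.countable_empty
      ext t; simp [h]
    · have hc : l i - l j ≠ 0 := sub_ne_zero.2 h
      apply (Set.countable_range fun n : ℤ =>
        (((n : ℂ) * (2 * Real.pi * Complex.I)) / (l i - l j)).re).mono
      rintro t ⟨-, ht⟩
      rw [Complex.exp_eq_one_iff] at ht
      obtain ⟨n, hn⟩ := ht
      refine ⟨n, ?_⟩
      have h2 : ((n : ℂ) * (2 * Real.pi * Complex.I)) / (l i - l j) = (t : ℂ) := by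
        rw [← hn, mul_div_cancel_left₀ _ hc]
      show ((n : ℂ) * (2 * Real.pi * Complex.I) / (l i - l j)).re = t
      rw [h2, Complex.ofReal_re]
  obtain ⟨t, ht⟩ : ∃ t : ℝ, t ∉ S := by
    by_contra h
    push_neg at h
    exact Cardinal.not_countable_real (hS.mono fun x _ => h x)
  refine ⟨fun k => (k : ℝ) * t, ?_⟩
  have hv : Function.Injective fun j : Fin 4 => Complex.exp (l j * t) := by
    intro i j hij
    simp only at hij
    by_contra hne
    have hlij : l i ≠ l j := fun h => hne (hl h)
    have : Complex.exp ((l i - l j) * t) = 1 := by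
      rw [sub_mul, Complex.exp_sub, hij, div_self (Complex.exp_ne_zero _)]
    exact ht (Set.mem_iUnion.2 ⟨i, Set.mem_iUnion.2 ⟨j, hlij, this⟩⟩)
  have hM : (Matrix.of fun j k : Fin 4 =>
      Complex.exp (l j * (((k : ℝ) * t : ℝ) : ℂ))) =
      Matrix.vandermonde fun j : Fin 4 => Complex.exp (l j * t) := by
    ext j k
    simp only [Matrix.of_apply, Matrix.vandermonde]
    push_cast
    rw [show l j * ((k : ℂ) * t) = (k : ℕ) * (l j * t) by ring,
      Complex.exp_nat_mul]
  rw [hM, Matrix.isUnit_iff_isUnit_det, Matrix.det_vandermonde, isUnit_iff_ne_zero]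
  refine Finset.prod_ne_zero_iff.2 fun i _ => Finset.prod_ne_zero_iff.2 fun j hj => ?_
  rw [Finset.mem_Ioi] at hj
  exact sub_ne_zero.2 fun h => hj.ne' (hv h)
end

section
/- Let Γ be a finite group with representation G : Γ → GL(c,ℂ), B ∈ Mat^Γ, and suppose Mat_{c×c} = T_BΣ + V where T_BΣ = {[B,y] : y ∈ Mat_{c×c}} and V = span{v₁,...,v_p}. Let π be the averaging projection onto Mat^Γ. Then Mat^Γ = T_BΣ^Γ + span{π(v₁),...,π(v_p)}, where T_BΣ^Γ = {[B,y] : y ∈ Mat^Γ}. -/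
/-!
Averaging over `Γ` is a linear projection `π` of `Mat` onto the commutant `Mat^Γ`, and a map of
`Mat^Γ`-bimodules: `π (B * y) = B * π y` and `π (y * B) = π y * B` for `B ∈ Mat^Γ`. Applying `π` to
a decomposition `X = [B, y] + ∑ aᵢ vᵢ` of `X ∈ Mat^Γ` therefore gives
`X = [B, π y] + ∑ aᵢ π vᵢ` with `π y ∈ Mat^Γ`. Conversely `Mat^Γ` is a subalgebra containing
`B` and every `π vᵢ`.
-/

open Matrix

namespace Avg

variable {Γ : Type*} [Group Γ] {c : ℕ} (G : Γ →* GeneralLinearGroup (Fin c) ℂ)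

abbrev commutant : Subalgebra ℂ (Matrix (Fin c) (Fin c) ℂ) :=
  Subalgebra.centralizer ℂ (Set.range fun γ => (G γ : Matrix (Fin c) (Fin c) ℂ))

theorem mem_commutant {X : Matrix (Fin c) (Fin c) ℂ} :
    X ∈ commutant G ↔ ∀ γ, (G γ : Matrix (Fin c) (Fin c) ℂ) * X = X * G γ := by
  rw [Subalgebra.mem_centralizer_iff, Set.forall_mem_range]

variable [Fintype Γ]

noncomputable def avgLinear : Matrix (Fin c) (Fin c) ℂ →ₗ[ℂ] Matrix (Fin c) (Fin c) ℂ where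
  toFun := avg G
  map_add' X Y := by
    simp only [avg, ← smul_add, ← Finset.sum_add_distrib, mul_add, add_mul]
  map_smul' a X := by
    simp only [avg, mul_smul_comm, smul_mul_assoc, ← Finset.smul_sum, RingHom.id_apply,
      smul_comm a]

@[simp]
theorem avgLinear_apply (X : Matrix (Fin c) (Fin c) ℂ) : avgLinear G X = avg G X := rfl

theorem avg_mem_commutant (M : Matrix (Fin c) (Fin c) ℂ) : avg G M ∈ commutant G := by
  refine (mem_commutant G).2 fun γ₀ => ?_
  rw [avg, mul_smul_comm, smul_mul_assoc, Finset.mul_sum, Finset.sum_mul]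
  congr 1
  -- reindex the sum on the left by `γ ↦ γ₀ * γ`
  refine Fintype.sum_bijective (γ₀ * ·) (Group.mulLeft_bijective γ₀) _ _ fun γ => ?_
  simp only [map_mul, _root_.mul_inv_rev, Units.val_mul, mul_assoc, Units.inv_mul, mul_one]

theorem avg_of_mem_commutant {X : Matrix (Fin c) (Fin c) ℂ} (hX : X ∈ commutant G) :
    avg G X = X := by
  have hconj (γ : Γ) : (G γ : Matrix (Fin c) (Fin c) ℂ) * X * ((G γ)⁻¹ : GL (Fin c) ℂ) = X := by
    rw [(mem_commutant G).1 hX γ, mul_assoc, Units.mul_inv, mul_one]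
  rw [avg, Finset.sum_congr rfl fun γ _ => hconj γ, Finset.sum_const, Finset.card_univ,
    ← Nat.cast_smul_eq_nsmul ℂ, smul_smul, inv_mul_cancel₀ (by exact_mod_cast Fintype.card_ne_zero),
    one_smul]

variable {G}

theorem avg_mul_left_of_mem {B : Matrix (Fin c) (Fin c) ℂ} (hB : B ∈ commutant G)
    (y : Matrix (Fin c) (Fin c) ℂ) : avg G (B * y) = B * avg G y := by
  simp only [avg, mul_smul_comm, Finset.mul_sum, ← mul_assoc, (mem_commutant G).1 hB]

theorem avg_mul_right_of_mem {B : Matrix (Fin c) (Fin c) ℂ} (hB : B ∈ commutant G)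
    (y : Matrix (Fin c) (Fin c) ℂ) : avg G (y * B) = avg G y * B := by
  have hinv (γ : Γ) : Commute B ((G γ)⁻¹ : GL (Fin c) ℂ) :=
    Commute.units_inv_right (((mem_commutant G).1 hB γ : Commute _ B).symm)
  simp only [avg, smul_mul_assoc, Finset.sum_mul, mul_assoc, (hinv _).eq]

theorem avg_commutator {B : Matrix (Fin c) (Fin c) ℂ} (hB : B ∈ commutant G)
    (y : Matrix (Fin c) (Fin c) ℂ) : avg G (B * y - y * B) = B * avg G y - avg G y * B := by
  rw [← avgLinear_apply, map_sub, avgLinear_apply, avgLinear_apply, avg_mul_left_of_mem hB,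
    avg_mul_right_of_mem hB]

end Avg

open Avg

theorem stmt17 {Γ : Type*} [Group Γ] [Fintype Γ] {c p : ℕ}
    (G : Γ →* Matrix.GeneralLinearGroup (Fin c) ℂ)
    (B : Matrix (Fin c) (Fin c) ℂ)
    (hB : ∀ γ : Γ, (G γ : Matrix (Fin c) (Fin c) ℂ) * B = B * (G γ : Matrix (Fin c) (Fin c) ℂ))
    (v : Fin p → Matrix (Fin c) (Fin c) ℂ)
    (hspan : ∀ X : Matrix (Fin c) (Fin c) ℂ, ∃ y : Matrix (Fin c) (Fin c) ℂ, ∃ a : Fin p → ℂ,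
      X = (B * y - y * B) + ∑ i, a i • v i) :
    {X : Matrix (Fin c) (Fin c) ℂ |
        ∀ γ : Γ, (G γ : Matrix (Fin c) (Fin c) ℂ) * X = X * (G γ : Matrix (Fin c) (Fin c) ℂ)} =
      {X | ∃ y : Matrix (Fin c) (Fin c) ℂ,
        (∀ γ : Γ, (G γ : Matrix (Fin c) (Fin c) ℂ) * y = y * (G γ : Matrix (Fin c) (Fin c) ℂ)) ∧
        ∃ a : Fin p → ℂ, X = (B * y - y * B) + ∑ i, a i • avg G (v i)} := by
  have hBc : B ∈ commutant G := (mem_commutant G).2 hB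
  ext X
  simp only [Set.mem_ofPred_eq, ← mem_commutant]
  constructor
  · intro hX
    obtain ⟨y, a, hXy⟩ := hspan X
    refine ⟨avg G y, avg_mem_commutant G y, a, ?_⟩
    rw [← avg_of_mem_commutant G hX, hXy, ← avgLinear_apply, map_add, map_sum, avgLinear_apply,
      avg_commutator hBc]
    simp only [map_smul, avgLinear_apply]
  · rintro ⟨y, hy, a, rfl⟩
    exact add_mem (sub_mem (mul_mem hBc hy) (mul_mem hy hBc))
      (sum_mem fun i _ => Subalgebra.smul_mem _ (avg_mem_commutant G (v i)) (a i))
end
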